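/- Let Γ be a homogeneous 3-dimensional permutation structure with a minimal non-trivial ∅-definable equivalence relation E containing the 2-type →123, and let C be an E-class. If b lies in the <₁-convex closure of C but b ∉ C, then the entire E-class of b is contained in the <₁-convex closure of C. -/

import Mathlib

/-!
For `x <₁ y <₁ z` with `E x z` but `¬ E x y`, definability of `E` forbids `(x, z)` to have
the type of `(x, y)` or of `(y, z)`. If `y` lay between `x` and `z` in `<₂` or `<₃` as well,
then `(x, z)` would agree with both pairs in that order and in `<₁`, and with one of them in
the remaining order. So the type of `(y, z)` is the complement of that of `(x, y)` in `<₂` and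
`<₃`. (The order `<ᵢ₊₁` is `o i`.)

Given `a₁ <₁ b <₁ a₂` with `a₁, a₂ ∈ C`, `b ∉ C`, and `b' ∈ b/E` with `b' <₁ a₁`, applying this
to `b' <₁ a₁ <₁ b` and to `a₁ <₁ b <₁ a₂` shows that `(b', a₁)` and `(b, a₂)` have the same
type. An automorphism sending `b ↦ b'` and `a₂ ↦ a₁` then moves `a₁` to a point of `C` below
`b'`. The case `a₂ <₁ b'` is the same after reversing all three orders.
-/

open Function

section StrictTotalOrder

variable {α : Type*} {r : α → α → Prop} [IsStrictTotalOrder α r] {x y z : α}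

theorem rel_swap_iff_not_rel (h : x ≠ y) : r y x ↔ ¬ r x y :=
  ⟨asymm_of r, fun h' => ((trichotomous_of r x y).resolve_left h').resolve_left h⟩

theorem rel_iff_rel_of_rel_iff_rel (hxy : x ≠ y) (hyz : y ≠ z) (h : r x y ↔ r y z) :
    r x z ↔ r x y := by
  by_cases hx : r x y
  · exact iff_of_true (trans_of r hx (h.mp hx)) hx
  · have hzx : r z x := trans_of r ((rel_swap_iff_not_rel hyz).mpr (mt h.mpr hx))
      ((rel_swap_iff_not_rel hxy).mpr hx)
    exact iff_of_false (asymm_of r hzx) hx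

end StrictTotalOrder

section RelationalStructure

variable {Γ ι : Type*} (o : ι → Γ → Γ → Prop)

def SameType (x y x' y' : Γ) : Prop :=
  ∀ i, o i x y ↔ o i x' y'

def IsAutomorphism (g : Γ ≃ Γ) : Prop :=
  ∀ i x y, o i x y ↔ o i (g x) (g y)

def IsHomogeneous : Prop :=
  ∀ (A : Finset Γ) (f : Γ → Γ), (∀ a ∈ A, ∀ b ∈ A, SameType o a b (f a) (f b)) →
    ∃ g : Γ ≃ Γ, IsAutomorphism o g ∧ ∀ a ∈ A, g a = f a

/-- In a homogeneous structure the `∅`-definable binary relations are the unions of 2-types. -/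
def IsDefinable (E : Γ → Γ → Prop) : Prop :=
  ∀ x y x' y', x ≠ y → x' ≠ y' → SameType o x y x' y' → (E x y ↔ E x' y')

variable {o}

theorem SameType.swap [∀ i, IsStrictTotalOrder Γ (o i)] {x y x' y' : Γ}
    (h : SameType o x y x' y') (hxy : x ≠ y) (hxy' : x' ≠ y') : SameType o y x y' x' :=
  fun i => by rw [rel_swap_iff_not_rel (r := o i) hxy, rel_swap_iff_not_rel (r := o i) hxy', h i]

theorem IsAutomorphism.rel_iff {E : Γ → Γ → Prop} {g : Γ ≃ Γ} (hg : IsAutomorphism o g)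
    (hdef : IsDefinable o E) {x y : Γ} (hxy : x ≠ y) : E (g x) (g y) ↔ E x y :=
  (hdef x y (g x) (g y) hxy (g.injective.ne hxy) (hg · x y)).symm

theorem IsHomogeneous.exists_isAutomorphism [∀ i, IsStrictTotalOrder Γ (o i)]
    (hom : IsHomogeneous o) {x y x' y' : Γ} (h : SameType o x y x' y') (hxy : x ≠ y)
    (hxy' : x' ≠ y') : ∃ g : Γ ≃ Γ, IsAutomorphism o g ∧ g x = x' ∧ g y = y' := by
  classical
  have hirr : ∀ z z', SameType o z z z' z' := fun z z' i => iff_of_false (irrefl z) (irrefl z')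
  obtain ⟨g, hg, hgf⟩ := hom {x, y} (fun z => if z = x then x' else y') (by
    simp only [Finset.mem_insert, Finset.mem_singleton]
    rintro a (rfl | rfl) b (rfl | rfl) <;> simp [hxy.symm, hirr, h, h.swap hxy hxy'])
  exact ⟨g, hg, by simpa using hgf x, by simpa [hxy.symm] using hgf y⟩

theorem IsHomogeneous.swap (hom : IsHomogeneous o) : IsHomogeneous fun i => swap (o i) :=
  fun A f hf => by
    obtain ⟨g, hg, hgf⟩ := hom A f fun a ha b hb => hf b hb a ha
    exact ⟨g, fun i x y => hg i y x, hgf⟩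

theorem IsDefinable.swap {E : Γ → Γ → Prop} [Std.Symm E] (hdef : IsDefinable o E) :
    IsDefinable (fun i => swap (o i)) E := fun x y x' y' hxy hxy' h => by
  rw [comm_of E, hdef y x y' x' hxy.symm hxy'.symm h, comm_of E]

end RelationalStructure

section ThreeOrders

variable {Γ : Type*} {o : Fin 3 → Γ → Γ → Prop} [∀ i, IsStrictTotalOrder Γ (o i)]
  {E : Γ → Γ → Prop}

theorem IsDefinable.rel_iff_not_rel_of_lt_of_lt (hdef : IsDefinable o E) (hE : Equivalence E)
    {x y z : Γ} (hxy : o 0 x y) (hyz : o 0 y z) (hxz : E x z) (hnxy : ¬ E x y) {i : Fin 3}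
    (hi : i ≠ 0) : o i y z ↔ ¬ o i x y := by
  have hnyz : ¬ E y z := fun h => hnxy (hE.trans hxz (hE.symm h))
  have hxz' : o 0 x z := trans_of _ hxy hyz
  have hnot_xy : ¬ SameType o x z x y := fun h =>
    hnxy ((hdef _ _ _ _ (ne_of_irrefl hxz') (ne_of_irrefl hxy) h).mp hxz)
  have hnot_yz : ¬ SameType o x z y z := fun h =>
    hnyz ((hdef _ _ _ _ (ne_of_irrefl hxz') (ne_of_irrefl hyz) h).mp hxz)
  have hbetween :
      ∀ k, (o k x y ↔ o k y z) → (o k x z ↔ o k x y) ∧ (o k x z ↔ o k y z) := fun k h => by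
    have := rel_iff_rel_of_rel_iff_rel (ne_of_irrefl hxy) (ne_of_irrefl hyz) h
    tauto
  have hxz_or : ∀ k, (o k x z ↔ o k x y) ∨ (o k x z ↔ o k y z) := fun k => by
    by_cases h : o k x y ↔ o k y z
    · exact .inl (hbetween k h).1
    · tauto
  by_contra hnot
  have hi' := hbetween i (by tauto)
  have h0 := hbetween 0 (iff_of_true hxy hyz)
  obtain ⟨j, hj⟩ : ∃ j, ∀ k : Fin 3, k = 0 ∨ k = i ∨ k = j := by
    fin_cases i
    exacts [absurd rfl hi, ⟨2, by decide⟩, ⟨1, by decide⟩]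
  rcases hxz_or j with hPj | hQj
  · exact hnot_xy fun k => by
      rcases hj k with rfl | rfl | rfl <;> [exact h0.1; exact hi'.1; exact hPj]
  · exact hnot_yz fun k => by
      rcases hj k with rfl | rfl | rfl <;> [exact h0.2; exact hi'.2; exact hQj]

theorem IsHomogeneous.exists_rel_lt (hom : IsHomogeneous o) (hE : Equivalence E)
    (hdef : IsDefinable o E) {a₁ b a₂ b' : Γ} (ha₁b : o 0 a₁ b) (hba₂ : o 0 b a₂) (ha : E a₁ a₂)
    (hb : ¬ E a₁ b) (hbb' : E b b') (hb'a₁ : o 0 b' a₁) : ∃ a, E a₁ a ∧ o 0 a b' := by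
  have hb'a₁' : ¬ E b' a₁ := fun h => hb (hE.symm (hE.trans hbb' h))
  have hT : SameType o b a₂ b' a₁ := fun k => by
    by_cases hk : k = 0
    · subst hk
      exact iff_of_true hba₂ hb'a₁
    · have h₁ := hdef.rel_iff_not_rel_of_lt_of_lt hE hb'a₁ ha₁b (hE.symm hbb') hb'a₁' hk
      have h₂ := hdef.rel_iff_not_rel_of_lt_of_lt hE ha₁b hba₂ ha hb hk
      tauto
  obtain ⟨g, hg, hgb, hga₂⟩ :=
    hom.exists_isAutomorphism hT (ne_of_irrefl hba₂) (ne_of_irrefl hb'a₁)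
  refine ⟨g a₁, ?_, ?_⟩
  · have := (hg.rel_iff hdef (ne_of_irrefl (trans_of _ ha₁b hba₂))).mpr ha
    rw [hga₂] at this
    exact hE.symm this
  · simpa [hgb] using (hg 0 a₁ b).mp ha₁b

end ThreeOrders

theorem stmt12_general {Γ : Type*} (o : Fin 3 → Γ → Γ → Prop)
    (ho : ∀ i, IsStrictTotalOrder Γ (o i))
    (hom : ∀ (A : Finset Γ) (f : Γ → Γ),
      (∀ a ∈ A, ∀ b ∈ A, ∀ i, o i a b ↔ o i (f a) (f b)) →
      ∃ g : Γ ≃ Γ, (∀ i x y, o i x y ↔ o i (g x) (g y)) ∧ ∀ a ∈ A, g a = f a)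
    (E : Γ → Γ → Prop) (hE : Equivalence E)
    (hdef : ∀ x y x' y' : Γ, x ≠ y → x' ≠ y' →
      (∀ i, o i x y ↔ o i x' y') → (E x y ↔ E x' y'))
    (c b : Γ)
    -- b lies in the <₁-convex closure of C = c/E but not in C
    (hconv : ∃ a₁ a₂, E c a₁ ∧ E c a₂ ∧ o 0 a₁ b ∧ o 0 b a₂)
    (hb : ¬ E c b) :
    ∀ b', E b b' → ∃ a₁ a₂, E c a₁ ∧ E c a₂ ∧ o 0 a₁ b' ∧ o 0 b' a₂ := by
  have := ho
  have := hE.stdSymm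
  have hom : IsHomogeneous o := hom
  have hdef : IsDefinable o E := hdef
  intro b' hbb'
  obtain ⟨a₁, a₂, hca₁, hca₂, ha₁b, hba₂⟩ := hconv
  have ha : E a₁ a₂ := hE.trans (hE.symm hca₁) hca₂
  have hb' : ∀ a, E c a → b' ≠ a := fun a hca h => hb (hE.trans hca (h ▸ hE.symm hbb'))
  rcases trichotomous_of (o 0) b' a₁ with hb'a₁ | h | ha₁b'
  · obtain ⟨a, ha₁a, hab'⟩ := hom.exists_rel_lt hE hdef ha₁b hba₂ ha
      (fun h => hb (hE.trans hca₁ h)) hbb' hb'a₁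
    exact ⟨a, a₁, hE.trans hca₁ ha₁a, hca₁, hab', hb'a₁⟩
  · exact absurd h (hb' a₁ hca₁)
  rcases trichotomous_of (o 0) b' a₂ with hb'a₂ | h | ha₂b'
  · exact ⟨a₁, a₂, hca₁, hca₂, ha₁b', hb'a₂⟩
  · exact absurd h (hb' a₂ hca₂)
  · obtain ⟨a, ha₂a, hb'a⟩ := hom.swap.exists_rel_lt hE hdef.swap hba₂ ha₁b (hE.symm ha)
      (fun h => hb (hE.trans hca₂ h)) hbb' ha₂b'
    exact ⟨a₂, a, hca₂, hE.trans hca₂ ha₂a, ha₂b', hb'a⟩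

/-- In a homogeneous 3-dimensional permutation structure with
minimal non-trivial ∅-definable equivalence relation `E` containing `→123`, if
`b` lies in the `<₁`-convex closure of an `E`-class `C` (i.e. `<₁`-between two
elements of `C`) but `b ∉ C`, then every point `E`-equivalent to `b` also lies
in the `<₁`-convex closure of `C`.  Here `<₁ = o 0`, and `C = c/E`. -/
theorem stmt12 {Γ : Type*} (o : Fin 3 → Γ → Γ → Prop)
    (ho : ∀ i, IsStrictTotalOrder Γ (o i))
    (hom : ∀ (A : Finset Γ) (f : Γ → Γ),
      (∀ a ∈ A, ∀ b ∈ A, ∀ i, o i a b ↔ o i (f a) (f b)) →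
      ∃ g : Γ ≃ Γ, (∀ i x y, o i x y ↔ o i (g x) (g y)) ∧ ∀ a ∈ A, g a = f a)
    (E : Γ → Γ → Prop) (hE : Equivalence E)
    (hdef : ∀ x y x' y' : Γ, x ≠ y → x' ≠ y' →
      (∀ i, o i x y ↔ o i x' y') → (E x y ↔ E x' y'))
    (hnontriv : (∃ x y, x ≠ y ∧ E x y) ∧ (∃ x y, ¬ E x y))
    (hmin : ∀ E' : Γ → Γ → Prop, Equivalence E' →
      (∀ x y x' y' : Γ, x ≠ y → x' ≠ y' →
        (∀ i, o i x y ↔ o i x' y') → (E' x y ↔ E' x' y')) →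
      (∃ x y, x ≠ y ∧ E' x y) → (∀ x y, E' x y → E x y) →
      ∀ x y, E' x y ↔ E x y)
    (h123 : ∀ x y, (∀ i, o i x y) → E x y)
    (c b : Γ)
    -- b lies in the <₁-convex closure of C = c/E but not in C
    (hconv : ∃ a₁ a₂, E c a₁ ∧ E c a₂ ∧ o 0 a₁ b ∧ o 0 b a₂)
    (hb : ¬ E c b) :
    ∀ b', E b b' → ∃ a₁ a₂, E c a₁ ∧ E c a₂ ∧ o 0 a₁ b' ∧ o 0 b' a₂ :=
  stmt12_general o ho hom E hE hdef c b hconv hb
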